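/- arXiv:2312.15117 — 3 statements merged into one kernel-verified Lean document; each statement's English description precedes it below -/
import Mathlib

section
/- Let t be an odd prime, k an integer, and 1 ≤ j ≤ t-1. For the vector n⃗ ∈ ℤ^t with components n_i = -k·δ_{i,j-1} + k·δ_{i,j}, the quantity (t/2)·(n⃗·n⃗) + b⃗_t·n⃗ equals tk² + k, where b⃗_t = (0,1,...,t-1). Consequently, a partition with GBG-rank mod t equal to k·ω_t^j has t-core of size tk² + k. -/
open Finset PowerSeries

/-- Number of cells of the Young diagram with (column - row) ≡ i (mod t). -/
def rCount (μ : YoungDiagram) (t : ℕ) (i : ZMod t) : ℕ :=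
  (μ.cells.filter (fun c => ((c.2 : ZMod t) - (c.1 : ZMod t) = i))).card

/-- GBG-rank of a partition mod t: Σ_{i<t} r_i ω_t^i where ω_t = e^{2πi/t}. -/
noncomputable def GBG (μ : YoungDiagram) (t : ℕ) : ℂ :=
  ∑ i ∈ Finset.range t, (rCount μ t (i : ZMod t) : ℂ) *
    Complex.exp (2 * (Real.pi : ℂ) * Complex.I * (i : ℂ) / (t : ℂ))

/-- Generating function (formal power series in q) counting Young diagrams of each size
satisfying the predicate P. -/
noncomputable def GF (P : YoungDiagram → Prop) : PowerSeries ℚ :=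
  PowerSeries.mk fun n => (Nat.card {μ : YoungDiagram // μ.cells.card = n ∧ P μ} : ℚ)

/-- (q^s; q^s)_L  = ∏_{j=0}^{L-1} (1 - q^{s(j+1)}). -/
noncomputable def qp (s L : ℕ) : PowerSeries ℚ :=
  ∏ j ∈ Finset.range L, (1 - (PowerSeries.X : PowerSeries ℚ) ^ (s * (j + 1)))

/-- 1/(q^s;q^s)_L with the convention that it is 0 for L < 0. -/
noncomputable def qpi (s : ℕ) (L : ℤ) : PowerSeries ℚ :=
  if 0 ≤ L then (qp s L.toNat)⁻¹ else 0

/-- Gaussian binomial coefficient [m choose n] in the variable q^s,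
equal to 0 unless m ≥ n ≥ 0. -/
noncomputable def gbinom (s : ℕ) (m n : ℤ) : PowerSeries ℚ :=
  if 0 ≤ n ∧ n ≤ m then qp s m.toNat * (qp s n.toNat)⁻¹ * (qp s (m - n).toNat)⁻¹ else 0

/-- (-q^s; q^{2s})_L = ∏_{j=0}^{L-1}(1 + q^{s(2j+1)}), with value 0 convention not needed
but defined as 0 for L < 0. -/
noncomputable def aqp (s : ℕ) (L : ℤ) : PowerSeries ℚ :=
  if 0 ≤ L then
    ∏ j ∈ Finset.range L.toNat, (1 + (PowerSeries.X : PowerSeries ℚ) ^ (s * (2 * j + 1)))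
  else 0

/-- Multiplicity of the part m in the partition given by a Young diagram. -/
def mult (μ : YoungDiagram) (m : ℕ) : ℕ :=
  ((Finset.range (μ.colLen 0)).filter (fun j => μ.rowLen j = m)).card

/-- The Maya diagram / beta-set of a partition: the set {λ_j - j : j ≥ 1} ⊆ ℤ. -/
def InS (μ : YoungDiagram) (x : ℤ) : Prop :=
  ∃ j : ℕ, (μ.rowLen j : ℤ) - (j + 1) = x

/-- `g` is the i-th component of the t-quotient of μ (Littlewood decomposition):
the Maya diagram of g is the i-th slice mod t of the Maya diagram of μ. -/
def QuotComp (t : ℕ) (i : ℕ) (μ g : YoungDiagram) : Prop :=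
  ∀ m : ℤ, InS μ (t * m + i) ↔ InS g m

/-- μ is a t-core: its Young diagram has no rim hooks of length t, equivalently
its Maya diagram is closed under subtracting t. -/
def IsTCore (t : ℕ) (μ : YoungDiagram) : Prop :=
  ∀ x : ℤ, InS μ x → InS μ (x - t)

/-- i-th component of the vector n⃗(μ,t):  r_i - r_{i+1} (indices mod t). -/
def nVec (μ : YoungDiagram) (t : ℕ) (i : ℕ) : ℤ :=
  (rCount μ t (i : ZMod t) : ℤ) - (rCount μ t ((i + 1 : ℕ) : ZMod t) : ℤ)

/-- `h` is the t-core of μ: h is a t-core with the same vector n⃗ as μ. -/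
def TCoreOf (t : ℕ) (μ h : YoungDiagram) : Prop :=
  IsTCore t h ∧ ∀ i : ℕ, i < t → nVec h t i = nVec μ t i

/-!
Write `r_i` for the number of cells of content `≡ i (mod t)`. As `t` is prime, the powers
`1, ω, …, ω^(t-2)` of `ω = e^(2πi/t)` are linearly independent over `ℚ` while
`1 + ω + ⋯ + ω^(t-1) = 0`, so `GBG = k ω^j` forces `r_i = r + k δ_{ij}`, that is
`n⃗ = k (e_j - e_{j-1})`.

On the `t`-abacus of a `t`-core the beads of runner `i` are exactly the levels below a charge
`c_i`. Comparing the first `tL` beta-numbers with those of the empty partition, runner by runner,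
gives `n_i = c_i`, `∑ c_i = 0` and `2 |core| = t ∑ c_i² + 2 ∑ i c_i`, which is
`2 (t k² + k)` for `c = n⃗`.
-/

theorem Int.exists_forall_iff_lt {P : ℤ → Prop} (hdown : ∀ m, P m → P (m - 1))
    (hne : ∃ m, P m) (hbdd : ∃ b, ∀ m, P m → m ≤ b) : ∃ c, ∀ m, P m ↔ m < c := by
  obtain ⟨g, hg, hmax⟩ := Int.exists_greatest_of_bdd hbdd hne
  refine ⟨g + 1, fun m => ⟨fun hm => Int.lt_add_one_of_le (hmax m hm), fun hm => ?_⟩⟩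
  exact Int.leInductionDown (motive := fun n _ => P n) hg (fun n _ => hdown n) m (by omega)

theorem Int.two_mul_sum_Ico_id {a b : ℤ} (hab : a ≤ b) :
    2 * ∑ m ∈ Ico a b, m = (b - a) * (a + b - 1) := by
  induction b, hab using Int.leInduction with
  | base => simp
  | succ b hab ih =>
    rw [← insert_Ico_right_eq_Ico_add_one hab, sum_insert right_notMem_Ico]
    linear_combination ih

theorem card_filter_range_sub_card_filter_range {t : ℕ} (n : ℕ) (s i : ZMod t) :
    (#{c ∈ range n | ((c : ℕ) : ZMod t) - s = i} : ℤ) -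
        #{c ∈ range n | ((c : ℕ) : ZMod t) - s = i + 1} =
      (if (n : ZMod t) - s = i + 1 then 1 else 0) - if -s = i + 1 then 1 else 0 := by
  induction n with
  | zero => simp
  | succ n ih =>
    have hsucc : ((n + 1 : ℕ) : ZMod t) - s = (n - s) + 1 := by push_cast; ring
    simp only [card_filter, sum_range_succ, Nat.cast_sum, hsucc, add_left_inj] at ih ⊢
    push_cast at ih ⊢
    linear_combination ih

namespace YoungDiagram

theorem rowLen_eq_zero_of_colLen_le (μ : YoungDiagram) {j : ℕ} (hj : μ.colLen 0 ≤ j) :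
    μ.rowLen j = 0 := by
  by_contra h
  have := mem_iff_lt_colLen.1 (mem_iff_lt_rowLen.2 (Nat.pos_of_ne_zero h))
  omega

@[simp]
theorem colLen_bot (i : ℕ) : (⊥ : YoungDiagram).colLen i = 0 := by
  by_contra h
  simpa using mem_iff_lt_colLen.2 (Nat.pos_of_ne_zero h)

@[simp]
theorem rowLen_bot (j : ℕ) : (⊥ : YoungDiagram).rowLen j = 0 :=
  rowLen_eq_zero_of_colLen_le ⊥ (by simp)

theorem card_filter_cells (μ : YoungDiagram) (P : ℕ × ℕ → Prop) [DecidablePred P] {J : ℕ}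
    (hJ : μ.colLen 0 ≤ J) :
    #{x ∈ μ.cells | P x} = ∑ j ∈ range J, #{c ∈ range (μ.rowLen j) | P (j, c)} := by
  rw [card_eq_sum_card_fiberwise (f := Prod.fst) (t := range J)]
  · refine sum_congr rfl fun j _ => card_nbij' Prod.snd (Prod.mk j) ?_ ?_ ?_ ?_
    all_goals intro x; aesop (add simp mem_iff_lt_rowLen)
  · intro x hx
    have := mem_iff_lt_colLen.1 (μ.up_left_mem le_rfl (Nat.zero_le x.2) (mem_filter.1 hx).1)
    exact mem_range.2 (by omega)

theorem card_cells_eq_sum_rowLen (μ : YoungDiagram) {J : ℕ} (hJ : μ.colLen 0 ≤ J) :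
    #μ.cells = ∑ j ∈ range J, μ.rowLen j := by
  simpa using μ.card_filter_cells (fun _ => True) hJ

end YoungDiagram

def betaNum (μ : YoungDiagram) (j : ℕ) : ℤ := μ.rowLen j - (j + 1)

theorem inS_iff_exists_betaNum {μ : YoungDiagram} {x : ℤ} :
    InS μ x ↔ ∃ j, betaNum μ j = x :=
  Iff.rfl

theorem betaNum_strictAnti (μ : YoungDiagram) : StrictAnti (betaNum μ) := fun j₁ j₂ hj => by
  have := μ.rowLen_anti j₁ j₂ hj.le
  simp only [betaNum]
  omega

theorem betaNum_of_colLen_le (μ : YoungDiagram) {j : ℕ} (hj : μ.colLen 0 ≤ j) :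
    betaNum μ j = -(j + 1) := by
  simp [betaNum, μ.rowLen_eq_zero_of_colLen_le hj]

theorem neg_le_betaNum (μ : YoungDiagram) (j : ℕ) : -(j + 1 : ℤ) ≤ betaNum μ j := by
  simp only [betaNum]
  omega

theorem intCast_betaNum_eq_iff {t : ℕ} (μ : YoungDiagram) (j : ℕ) (i : ZMod t) :
    ((betaNum μ j : ℤ) : ZMod t) = i ↔ (μ.rowLen j : ZMod t) - j = i + 1 := by
  simp only [betaNum]
  push_cast
  constructor <;> intro h <;> linear_combination h

theorem inS_of_le_neg_colLen (μ : YoungDiagram) {x : ℤ} (hx : x ≤ -(μ.colLen 0 + 1)) :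
    InS μ x :=
  inS_iff_exists_betaNum.2 ⟨(-x - 1).toNat, by rw [betaNum_of_colLen_le μ (by omega)]; omega⟩

theorem le_betaNum_zero_of_inS {μ : YoungDiagram} {x : ℤ} (hx : InS μ x) :
    x ≤ betaNum μ 0 := by
  obtain ⟨j, rfl⟩ := inS_iff_exists_betaNum.1 hx
  exact (betaNum_strictAnti μ).antitone (Nat.zero_le j)

theorem inS_bot_iff {x : ℤ} : InS ⊥ x ↔ x < 0 := by
  refine ⟨fun h => ?_, fun hx => inS_of_le_neg_colLen ⊥ ?_⟩
  · obtain ⟨j, rfl⟩ := inS_iff_exists_betaNum.1 h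
    rw [betaNum_of_colLen_le ⊥ (by simp)]
    omega
  · rw [YoungDiagram.colLen_bot]
    omega

theorem rCount_sub_rCount_add_one (μ : YoungDiagram) (t : ℕ) (i : ZMod t) {J : ℕ}
    (hJ : μ.colLen 0 ≤ J) :
    (rCount μ t i : ℤ) - rCount μ t (i + 1) = ∑ j ∈ range J,
      ((if (betaNum μ j : ZMod t) = i then 1 else 0) -
        if (betaNum ⊥ j : ZMod t) = i then 1 else 0) := by
  simp only [rCount, μ.card_filter_cells _ hJ, Nat.cast_sum, ← sum_sub_distrib,
    card_filter_range_sub_card_filter_range, intCast_betaNum_eq_iff, YoungDiagram.rowLen_bot,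
    Nat.cast_zero, zero_sub]

theorem card_cells_eq_sum_betaNum_sub (μ : YoungDiagram) {J : ℕ} (hJ : μ.colLen 0 ≤ J) :
    (#μ.cells : ℤ) = ∑ j ∈ range J, (betaNum μ j - betaNum ⊥ j) := by
  rw [μ.card_cells_eq_sum_rowLen hJ, Nat.cast_sum]
  refine sum_congr rfl fun j _ => ?_
  simp only [betaNum, YoungDiagram.rowLen_bot, Nat.cast_zero]
  ring

theorem exists_colLen_le_mul_and_neg_le {t : ℕ} (ht : 0 < t) (μ : YoungDiagram)
    (c : ℕ → ℤ) : ∃ L : ℕ, μ.colLen 0 ≤ t * L ∧ ∀ i < t, -(L : ℤ) ≤ c i := by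
  refine ⟨μ.colLen 0 + ∑ i ∈ range t, (c i).natAbs, ?_, fun i hi => ?_⟩
  · exact (Nat.le_add_right _ _).trans (Nat.le_mul_of_pos_left _ ht)
  · have := single_le_sum (fun i _ => Nat.zero_le (c i).natAbs) (mem_range.2 hi)
    omega

/-- The `t`-charges of `μ`: on runner `i` of the `t`-abacus, the beads occupy exactly the
levels below `c i`. -/
def HasCharges (t : ℕ) (μ : YoungDiagram) (c : ℕ → ℤ) : Prop :=
  ∀ i < t, ∀ m : ℤ, InS μ (t * m + i) ↔ m < c i

theorem hasCharges_bot (t : ℕ) : HasCharges t ⊥ 0 := fun i hi m => by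
  rw [inS_bot_iff, Pi.zero_apply]
  constructor <;> intro h <;> nlinarith

theorem IsTCore.exists_hasCharges {t : ℕ} (ht : 0 < t) {μ : YoungDiagram} (hμ : IsTCore t μ) :
    ∃ c, HasCharges t μ c := by
  have ht' : (1 : ℤ) ≤ t := by exact_mod_cast ht
  have (i : ℕ) : ∃ ci, ∀ m : ℤ, InS μ (t * m + i) ↔ m < ci := by
    refine Int.exists_forall_iff_lt (fun m hm => ?_) ⟨-(μ.colLen 0 + 1 + i), ?_⟩
      ⟨μ.rowLen 0, fun m hm => ?_⟩
    · simpa [mul_sub, sub_add_eq_add_sub] using hμ _ hm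
    · exact inS_of_le_neg_colLen μ (by nlinarith)
    · have := le_betaNum_zero_of_inS hm
      simp only [betaNum] at this
      nlinarith
  choose c hc using this
  exact ⟨c, fun i _ => hc i⟩

namespace HasCharges

variable {t : ℕ} {μ : YoungDiagram} {c : ℕ → ℤ}

theorem sum_betaNum {M : Type*} [AddCommMonoid M] (ht : 0 < t) (hc : HasCharges t μ c) {L : ℕ}
    (hL : μ.colLen 0 ≤ t * L) (f : ℤ → M) :
    ∑ j ∈ range (t * L), f (betaNum μ j) =
      ∑ i ∈ range t, ∑ m ∈ Ico (-(L : ℤ)) (c i), f (t * m + i) := by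
  have ht' : (0 : ℤ) < t := by exact_mod_cast ht
  have hrem (x : ℤ) : ((x % t).toNat : ℤ) = x % t :=
    Int.toNat_of_nonneg (Int.emod_nonneg x ht'.ne')
  rw [sum_sigma']
  -- as `colLen 0 ≤ t * L`, the first `t * L` beta-numbers are exactly those `≥ -(t * L)`
  refine sum_bij (fun j _ => ⟨(betaNum μ j % t).toNat, betaNum μ j / t⟩) (fun j hj => ?_)
    (fun j₁ _ j₂ _ h => ?_) (fun ⟨i, m⟩ him => ?_) (fun j _ => ?_)
  · have := Int.emod_lt_of_pos (betaNum μ j) ht'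
    have := neg_le_betaNum μ j
    have := mem_range.1 hj
    simp only [mem_sigma, mem_range, mem_Ico]
    refine ⟨by omega, (Int.le_ediv_iff_mul_le ht').2 (by nlinarith), (hc _ (by omega) _).1 ?_⟩
    rw [hrem, Int.mul_ediv_add_emod]
    exact ⟨j, rfl⟩
  · simp only [Sigma.mk.inj_iff, heq_eq_eq] at h
    apply (betaNum_strictAnti μ).injective
    have hmod : betaNum μ j₁ % t = betaNum μ j₂ % t := by rw [← hrem, h.1, hrem]
    rw [← Int.mul_ediv_add_emod (betaNum μ j₁) t, h.2, hmod, Int.mul_ediv_add_emod]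
  · simp only [mem_sigma, mem_range, mem_Ico] at him
    obtain ⟨j, hj⟩ := inS_iff_exists_betaNum.1 ((hc i him.1 m).2 him.2.2)
    have hjL : j < t * L := by
      by_contra hjL
      rw [betaNum_of_colLen_le μ (hL.trans (not_lt.1 hjL))] at hj
      nlinarith
    obtain ⟨hq, hr⟩ := (Int.ediv_emod_unique ht').2
      ⟨(add_comm _ _ : (i : ℤ) + t * m = t * m + i), Int.natCast_nonneg i, by omega⟩
    exact ⟨j, mem_range.2 hjL, by simp [hj, hq, hr]⟩
  · simp only
    rw [hrem, Int.mul_ediv_add_emod]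

theorem sum_sub_betaNum_bot {G : Type*} [AddCommGroup G] (ht : 0 < t) (hc : HasCharges t μ c)
    {L : ℕ} (hL : μ.colLen 0 ≤ t * L) (f : ℤ → G) :
    ∑ j ∈ range (t * L), (f (betaNum μ j) - f (betaNum ⊥ j)) =
      ∑ i ∈ range t, (∑ m ∈ Ico (-(L : ℤ)) (c i), f (t * m + i) -
        ∑ m ∈ Ico (-(L : ℤ)) 0, f (t * m + i)) := by
  rw [sum_sub_distrib, hc.sum_betaNum ht hL, (hasCharges_bot t).sum_betaNum ht (by simp),
    ← sum_sub_distrib]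
  rfl

theorem sum_eq_zero (ht : 0 < t) (hc : HasCharges t μ c) : ∑ i ∈ range t, c i = 0 := by
  obtain ⟨L, hL, hcL⟩ := exists_colLen_le_mul_and_neg_le ht μ c
  have key := hc.sum_sub_betaNum_bot ht hL fun _ => (1 : ℤ)
  simp only [sub_self, sum_const_zero, sum_const, nsmul_eq_mul, mul_one] at key
  rw [key]
  refine sum_congr rfl fun i hi => ?_
  rw [Int.card_Ico_of_le _ _ (hcL i (mem_range.1 hi)), Int.card_Ico_of_le (-(L : ℤ)) 0 (by omega)]
  ring

theorem nVec_eq (ht : 0 < t) (hc : HasCharges t μ c) {i : ℕ} (hi : i < t) :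
    nVec μ t i = c i := by
  obtain ⟨L, hL, hcL⟩ := exists_colLen_le_mul_and_neg_le ht μ c
  have hres {i' : ℕ} (hi' : i' < t) (m : ℤ) : ((t * m + i' : ℤ) : ZMod t) = i ↔ i' = i := by
    simp [ZMod.natCast_eq_natCast_iff', Nat.mod_eq_of_lt hi, Nat.mod_eq_of_lt hi']
  have key := hc.sum_sub_betaNum_bot ht hL fun x => if (x : ZMod t) = i then (1 : ℤ) else 0
  rw [nVec, Nat.cast_succ, rCount_sub_rCount_add_one μ t i hL, key,
    sum_congr rfl fun i' hi' => ?_, sum_ite_eq' (range t) i c, if_pos (mem_range.2 hi)]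
  simp only [hres (mem_range.1 hi')]
  split_ifs
  · have hle := hcL i' (mem_range.1 hi')
    rw [sum_const, sum_const, nsmul_one, nsmul_one, Int.card_Ico_of_le _ _ hle,
      Int.card_Ico_of_le (-(L : ℤ)) 0 (by omega)]
    ring
  · simp

theorem two_mul_card (ht : 0 < t) (hc : HasCharges t μ c) :
    2 * (#μ.cells : ℤ) =
      t * ∑ i ∈ range t, c i ^ 2 + 2 * ∑ i ∈ range t, (i : ℤ) * c i := by
  obtain ⟨L, hL, hcL⟩ := exists_colLen_le_mul_and_neg_le ht μ c
  have hrunner {i : ℕ} {b : ℤ} (hb : -(L : ℤ) ≤ b) :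
      2 * ∑ m ∈ Ico (-(L : ℤ)) b, (t * m + i : ℤ) =
        t * (b + L) * (b - L - 1) + 2 * i * (b + L) := by
    rw [sum_add_distrib, ← mul_sum, sum_const, nsmul_eq_mul, Int.card_Ico_of_le _ _ hb, mul_add,
      mul_left_comm, Int.two_mul_sum_Ico_id hb]
    ring
  have hdiff : ∀ i ∈ range t, 2 * (∑ m ∈ Ico (-(L : ℤ)) (c i), (t * m + i : ℤ) -
      ∑ m ∈ Ico (-(L : ℤ)) 0, (t * m + i : ℤ)) = t * (c i ^ 2 - c i) + 2 * i * c i := by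
    intro i hi
    rw [mul_sub, hrunner (hcL i (mem_range.1 hi)), hrunner (by omega)]
    ring
  have key := hc.sum_sub_betaNum_bot ht hL fun x => x
  rw [card_cells_eq_sum_betaNum_sub μ hL, key, mul_sum, sum_congr rfl hdiff]
  calc ∑ i ∈ range t, (t * (c i ^ 2 - c i) + 2 * i * c i)
      = t * ∑ i ∈ range t, c i ^ 2 - t * ∑ i ∈ range t, c i +
          2 * ∑ i ∈ range t, (i : ℤ) * c i := by
        simp only [mul_sub, sum_add_distrib, sum_sub_distrib, mul_sum, mul_assoc]
    _ = _ := by rw [hc.sum_eq_zero ht, mul_zero, sub_zero]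

end HasCharges

theorem IsPrimitiveRoot.eq_of_sum_intCast_mul_pow_eq_zero {K : Type*} [Field K] [CharZero K]
    {p : ℕ} (hp : p.Prime) {ω : K} (hω : IsPrimitiveRoot ω p) {a : ℕ → ℤ}
    (hsum : ∑ i ∈ range p, (a i : K) * ω ^ i = 0) {i : ℕ} (hi : i < p) :
    a i = a (p - 1) := by
  have hli : LinearIndependent ℚ fun i : Fin (p - 1) => ω ^ (i : ℕ) := by
    have := linearIndependent_pow (K := ℚ) ω
    rwa [← Polynomial.cyclotomic_eq_minpoly_rat hω hp.pos, Polynomial.natDegree_cyclotomic,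
      Nat.totient_prime hp] at this
  set b : ℕ → ℚ := fun i => a i - a (p - 1)
  -- `1 + ω + ⋯ + ω ^ (p - 1) = 0` eliminates the top coefficient
  have hb : ∑ i : Fin (p - 1), b i • ω ^ (i : ℕ) = 0 := by
    have hp1 : p = p - 1 + 1 := (Nat.sub_add_cancel hp.one_le).symm
    rw [Fin.sum_univ_eq_sum_range (fun i => b i • ω ^ i)]
    calc ∑ i ∈ range (p - 1), b i • ω ^ i = ∑ i ∈ range p, b i • ω ^ i := by
          rw [hp1, sum_range_succ, Nat.add_sub_cancel]; simp [b]
      _ = ∑ i ∈ range p, (a i : K) * ω ^ i - a (p - 1) * ∑ i ∈ range p, ω ^ i := by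
          simp [b, Rat.smul_def, sub_mul, mul_sum]
      _ = 0 := by rw [hsum, hω.geom_sum_eq_zero hp.one_lt, mul_zero, sub_zero]
  rcases Nat.lt_or_ge i (p - 1) with hi' | hi'
  · simpa [b, sub_eq_zero] using Fintype.linearIndependent_iff.1 hli _ hb ⟨i, hi'⟩
  · rw [show i = p - 1 by omega]

theorem Complex.exp_two_pi_I_mul_div_eq_pow (i t : ℕ) :
    exp (2 * Real.pi * I * i / t) = exp (2 * Real.pi * I / t) ^ i := by
  rw [← exp_nat_mul]
  ring_nf

theorem rCount_eq_of_GBG_eq {t : ℕ} (ht : t.Prime) {k : ℤ} {j : ℕ} (hjt : j < t)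
    {μ : YoungDiagram} (hgbg : GBG μ t = k * Complex.exp (2 * Real.pi * Complex.I * j / t)) :
    ∃ r : ℤ, ∀ i < t, (rCount μ t i : ℤ) = r + if i = j then k else 0 := by
  set ω := Complex.exp (2 * Real.pi * Complex.I / t)
  have hω : IsPrimitiveRoot ω t := Complex.isPrimitiveRoot_exp t ht.ne_zero
  set a : ℕ → ℤ := fun i => rCount μ t i - if i = j then k else 0
  have hsum : ∑ i ∈ range t, (a i : ℂ) * ω ^ i = 0 := by
    simp only [GBG, Complex.exp_two_pi_I_mul_div_eq_pow] at hgbg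
    simpa [a, sub_mul, sum_sub_distrib, hjt, sub_eq_zero] using hgbg
  exact ⟨a (t - 1), fun i hi => by linarith [hω.eq_of_sum_intCast_mul_pow_eq_zero ht hsum hi]⟩

def dipole (k : ℤ) (j i : ℕ) : ℤ :=
  -k * (if i = j - 1 then 1 else 0) + k * (if i = j then 1 else 0)

theorem nVec_eq_dipole_of_GBG_eq {t : ℕ} (ht : t.Prime) {k : ℤ} {j : ℕ} (hj1 : 1 ≤ j)
    (hjt : j < t) {μ : YoungDiagram}
    (hgbg : GBG μ t = k * Complex.exp (2 * Real.pi * Complex.I * j / t)) {i : ℕ} (hi : i < t) :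
    nVec μ t i = dipole k j i := by
  obtain ⟨r, hr⟩ := rCount_eq_of_GBG_eq ht hjt hgbg
  unfold nVec dipole
  rcases Nat.lt_or_ge (i + 1) t with hi1 | hi1
  · rw [hr i hi, hr (i + 1) hi1]
    split_ifs <;> omega
  · rw [show i + 1 = t by omega, ZMod.natCast_self, ← Nat.cast_zero, hr i hi, hr 0 ht.pos]
    split_ifs <;> omega

theorem sum_range_dipole_sq (k : ℤ) {t j : ℕ} (hj1 : 1 ≤ j) (hjt : j < t) :
    ∑ i ∈ range t, dipole k j i ^ 2 = 2 * k ^ 2 := by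
  rw [sum_eq_add_of_mem (j - 1) j (mem_range.2 (by omega)) (mem_range.2 hjt) (by omega)
    fun i _ hi => by simp [dipole, hi.1, hi.2]]
  simp only [dipole, if_true, if_neg (show j - 1 ≠ j by omega),
    if_neg (show j ≠ j - 1 by omega)]
  ring

theorem sum_range_mul_dipole (k : ℤ) {t j : ℕ} (hj1 : 1 ≤ j) (hjt : j < t) :
    ∑ i ∈ range t, (i : ℤ) * dipole k j i = k := by
  rw [sum_eq_add_of_mem (j - 1) j (mem_range.2 (by omega)) (mem_range.2 hjt) (by omega)
    fun i _ hi => by simp [dipole, hi.1, hi.2]]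
  simp only [dipole, if_true, if_neg (show j - 1 ≠ j by omega),
    if_neg (show j ≠ j - 1 by omega), Nat.cast_sub hj1, Nat.cast_one]
  ring

theorem tcore_size_of_gbg_mul_root_general (t : ℕ) (ht : t.Prime) (k : ℤ)
    (j : ℕ) (hj1 : 1 ≤ j) (hj2 : j ≤ t - 1) :
    ((t : ℚ) / 2 * (∑ i ∈ Finset.range t,
        (((-k * (if i = j - 1 then 1 else 0) + k * (if i = j then 1 else 0) : ℤ) : ℚ)) ^ 2) +
      (∑ i ∈ Finset.range t,
        (i : ℚ) * ((-k * (if i = j - 1 then 1 else 0) + k * (if i = j then 1 else 0) : ℤ) : ℚ)) =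
      (t : ℚ) * (k : ℚ) ^ 2 + (k : ℚ)) ∧
    (∀ μ h : YoungDiagram,
      GBG μ t = (k : ℂ) * Complex.exp (2 * (Real.pi : ℂ) * Complex.I * (j : ℂ) / (t : ℂ)) →
      TCoreOf t μ h → (h.cells.card : ℤ) = t * k ^ 2 + k) := by
  have hjt : j < t := by have := ht.two_le; omega
  have hsq := sum_range_dipole_sq k hj1 hjt
  have hlin := sum_range_mul_dipole k hj1 hjt
  refine ⟨?_, fun μ h hgbg ⟨hcore, hnVec⟩ => ?_⟩
  · change (t : ℚ) / 2 * ∑ i ∈ range t, ((dipole k j i : ℤ) : ℚ) ^ 2 +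
      ∑ i ∈ range t, (i : ℚ) * (dipole k j i : ℚ) = t * k ^ 2 + k
    have hsqℚ : ∑ i ∈ range t, ((dipole k j i : ℤ) : ℚ) ^ 2 = 2 * k ^ 2 := by
      exact_mod_cast hsq
    have hlinℚ : ∑ i ∈ range t, (i : ℚ) * (dipole k j i : ℚ) = k := by exact_mod_cast hlin
    rw [hsqℚ, hlinℚ]
    ring
  · obtain ⟨c, hc⟩ := hcore.exists_hasCharges ht.pos
    have hcd : ∀ i ∈ range t, c i = dipole k j i := fun i hi => by
      rw [← hc.nVec_eq ht.pos (mem_range.1 hi), hnVec i (mem_range.1 hi),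
        nVec_eq_dipole_of_GBG_eq ht hj1 hjt hgbg (mem_range.1 hi)]
    have hcsq : ∑ i ∈ range t, c i ^ 2 = 2 * k ^ 2 := by
      rw [← hsq]; exact sum_congr rfl fun i hi => by rw [hcd i hi]
    have hclin : ∑ i ∈ range t, (i : ℤ) * c i = k := by
      rw [← hlin]; exact sum_congr rfl fun i hi => by rw [hcd i hi]
    have hcard := hc.two_mul_card ht.pos
    rw [hcsq, hclin] at hcard
    linarith

/-- for odd prime t, 1 ≤ j ≤ t-1, and n_i = -k·δ_{i,j-1} + k·δ_{i,j},
(t/2)·n⃗·n⃗ + b⃗_t·n⃗ = tk² + k; consequently a partition with GBG-rank mod t equal to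
k·ω_t^j has t-core of size tk² + k. -/
theorem tcore_size_of_gbg_mul_root (t : ℕ) (ht : t.Prime) (htodd : Odd t) (k : ℤ)
    (j : ℕ) (hj1 : 1 ≤ j) (hj2 : j ≤ t - 1) :
    ((t : ℚ) / 2 * (∑ i ∈ Finset.range t,
        (((-k * (if i = j - 1 then 1 else 0) + k * (if i = j then 1 else 0) : ℤ) : ℚ)) ^ 2) +
      (∑ i ∈ Finset.range t,
        (i : ℚ) * ((-k * (if i = j - 1 then 1 else 0) + k * (if i = j then 1 else 0) : ℤ) : ℚ)) =
      (t : ℚ) * (k : ℚ) ^ 2 + (k : ℚ)) ∧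
    (∀ μ h : YoungDiagram,
      GBG μ t = (k : ℂ) * Complex.exp (2 * (Real.pi : ℂ) * Complex.I * (j : ℂ) / (t : ℂ)) →
      TCoreOf t μ h → (h.cells.card : ℤ) = t * k ^ 2 + k) :=
  tcore_size_of_gbg_mul_root_general t ht k j hj1 hj2
end

section
/- Under conjugation of partitions, the t-quotient reverses and conjugates componentwise: if π has Littlewood decomposition (π_{t-core}, (π̂_0, π̂_1, ..., π̂_{t-1})), then the conjugate π' has Littlewood decomposition (π'_{t-core}, (π̂'_{t-1}, π̂'_{t-2}, ..., π̂'_0)), where π'_{t-core} is the conjugate of π_{t-core} and each π̂'_i is the conjugate of π̂_i. Moreover, n⃗(π') = (-n_{t-1}, -n_{t-2}, ..., -n_1, -n_0) if n⃗(π) = (n_0, ..., n_{t-1}). -/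
open Finset PowerSeries

lemma InS_transpose (μ : YoungDiagram) (x : ℤ) :
    InS μ.transpose x ↔ ¬ InS μ (-1 - x) := by
  constructor
  · rintro ⟨k, hk⟩ ⟨j, hj⟩
    rw [YoungDiagram.rowLen_transpose] at hk
    rcases lt_or_ge k (μ.rowLen j) with h1 | h1
    · have hm : (j, k) ∈ μ := YoungDiagram.mem_iff_lt_rowLen.mpr h1
      have h2 : j < μ.colLen k := YoungDiagram.mem_iff_lt_colLen.mp hm
      omega
    · have hm : (j, k) ∉ μ := fun hm => by
        have := YoungDiagram.mem_iff_lt_rowLen.mp hm; omega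
      have h2 : ¬ j < μ.colLen k := fun h2 => hm (YoungDiagram.mem_iff_lt_colLen.mpr h2)
      omega
  · intro hni
    set y : ℤ := -1 - x with hy
    by_contra hne
    have hk0 : ∃ k0 : ℕ, (k0 : ℤ) ≥ y ∧ 0 ≤ (μ.colLen k0 : ℤ) - k0 + y := by
      rcases le_or_gt 0 y with hy0 | hy0
      · refine ⟨y.toNat, by omega, by omega⟩
      · refine ⟨0, by omega, ?_⟩
        by_contra hcon
        push_neg at hcon
        have hrow : μ.rowLen ((-1-y).toNat) = 0 := by
          by_contra hr
          have h1 : (((-1-y).toNat), 0) ∈ μ := YoungDiagram.mem_iff_lt_rowLen.mpr (by omega)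
          have := YoungDiagram.mem_iff_lt_colLen.mp h1
          push_cast at hcon
          omega
        exact hni ⟨(-1-y).toNat, by rw [hrow]; push_cast; omega⟩
    obtain ⟨k0, hk0y, hk0F⟩ := hk0
    have hdec : ∀ n : ℕ, (μ.colLen (k0+n) : ℤ) - (k0+n) + y ≤ (μ.colLen k0 : ℤ) - k0 + y - n := by
      intro n
      induction n with
      | zero => simp
      | succ n ih =>
        have h1 := μ.colLen_anti (k0+n) (k0+n+1) (by omega)
        have h2 : k0 + (n+1) = k0 + n + 1 := by omega
        rw [h2]
        push_cast at ih ⊢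
        omega
    have hP : ∃ n : ℕ, (μ.colLen (k0+n) : ℤ) - (k0+n) + y < 0 := by
      refine ⟨((μ.colLen k0 : ℤ) - k0 + y).toNat + 1, ?_⟩
      have := hdec (((μ.colLen k0 : ℤ) - k0 + y).toNat + 1)
      push_cast at this ⊢
      omega
    classical
    set n0 := Nat.find hP with hn0def
    have hn0 : (μ.colLen (k0+n0) : ℤ) - (k0+n0) + y < 0 := Nat.find_spec hP
    have hn0pos : 0 < n0 := by
      rcases Nat.eq_zero_or_pos n0 with h | h
      · rw [h] at hn0; simp at hn0; omega
      · exact h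
    set k := k0 + n0 - 1 with hkdef
    have hkF : 0 ≤ (μ.colLen k : ℤ) - k + y := by
      by_contra hcon
      push_neg at hcon
      have := Nat.find_min hP (m := n0 - 1) (by omega)
      have hkk : k = k0 + (n0 - 1) := by omega
      rw [hkk] at hcon
      exact this hcon
    have hk1 : (μ.colLen (k+1) : ℤ) - (k+1) + y < 0 := by
      have hkk : k + 1 = k0 + n0 := by omega
      rw [hkk]; omega
    rcases eq_or_lt_of_le hkF with heq | hlt
    · exact hne ⟨k, by rw [YoungDiagram.rowLen_transpose]; omega⟩
    · -- jump over zero: y ∈ Maya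
      have hkgey : 0 ≤ (k : ℤ) - y := by
        have : (0 : ℤ) ≤ μ.colLen (k+1) := by positivity
        omega
      set j := ((k : ℤ) - y).toNat with hjdef
      have hjz : (j : ℤ) = (k : ℤ) - y := by omega
      have hmem : (j, k) ∈ μ := YoungDiagram.mem_iff_lt_colLen.mpr (by omega)
      have hnmem : (j, k+1) ∉ μ := fun hm => by
        have := YoungDiagram.mem_iff_lt_colLen.mp hm
        omega
      have hr1 : k < μ.rowLen j := YoungDiagram.mem_iff_lt_rowLen.mp hmem
      have hr2 : μ.rowLen j ≤ k + 1 := by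
        by_contra hr
        exact hnmem (YoungDiagram.mem_iff_lt_rowLen.mpr (by omega))
      exact hni ⟨j, by omega⟩


lemma rCount_transpose (μ : YoungDiagram) (t : ℕ) (i : ZMod t) :
    rCount μ.transpose t i = rCount μ t (-i) := by
  unfold rCount
  apply Finset.card_bij (fun c _ => c.swap)
  · rintro ⟨a, b⟩ hc
    simp only [Finset.mem_filter, YoungDiagram.mem_cells, YoungDiagram.mem_transpose] at hc ⊢
    refine ⟨hc.1, ?_⟩
    have h := hc.2
    simp only [Prod.swap] at *
    rw [← h]; ring
  · rintro ⟨a, b⟩ _ ⟨c, d⟩ _ hcd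
    simp only [Prod.ext_iff, Prod.swap] at hcd ⊢
    tauto
  · rintro ⟨a, b⟩ hb
    refine ⟨(b, a), ?_, rfl⟩
    simp only [Finset.mem_filter, YoungDiagram.mem_cells, YoungDiagram.mem_transpose] at hb ⊢
    refine ⟨hb.1, ?_⟩
    have h := hb.2
    linear_combination -h

lemma nVec_transpose (μ : YoungDiagram) {t i : ℕ} (ht : 0 < t) (hi : i < t) :
    nVec μ.transpose t i = -(nVec μ t (t - 1 - i)) := by
  have hc1 : ((t - 1 - i : ℕ) : ZMod t) = -(((i + 1 : ℕ) : ZMod t)) := by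
    have h : ((t - 1 - i : ℕ) : ZMod t) + ((i + 1 : ℕ) : ZMod t) = 0 := by
      rw [← Nat.cast_add, show t - 1 - i + (i + 1) = t by omega, ZMod.natCast_self]
    exact eq_neg_of_add_eq_zero_left h
  have hc2 : ((t - 1 - i + 1 : ℕ) : ZMod t) = -((i : ℕ) : ZMod t) := by
    have h : ((t - 1 - i + 1 : ℕ) : ZMod t) + ((i : ℕ) : ZMod t) = 0 := by
      rw [← Nat.cast_add, show t - 1 - i + 1 + i = t by omega, ZMod.natCast_self]
    exact eq_neg_of_add_eq_zero_left h
  unfold nVec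
  rw [rCount_transpose, rCount_transpose, hc1, hc2]
  ring

/-- under conjugation, the t-quotient reverses and conjugates componentwise,
the t-core conjugates, and n⃗(π')_i = -n⃗(π)_{t-1-i}. -/
theorem littlewood_conjugation (t : ℕ) (ht : 0 < t) (μ : YoungDiagram)
    (g : ℕ → YoungDiagram) (hg : ∀ i : ℕ, i < t → QuotComp t i μ (g i)) :
    (∀ i : ℕ, i < t → QuotComp t i μ.transpose ((g (t - 1 - i)).transpose)) ∧
    (∀ h : YoungDiagram, TCoreOf t μ h → TCoreOf t μ.transpose h.transpose) ∧
    (∀ i : ℕ, i < t → nVec μ.transpose t i = -nVec μ t (t - 1 - i)) := by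
  refine ⟨?_, ?_, ?_⟩
  · intro i hi m
    have h3 := InS_transpose (g (t - 1 - i)) m
    rw [h3, InS_transpose]
    have hc : ((t - 1 - i : ℕ) : ℤ) = (t : ℤ) - 1 - i := by omega
    have he : (-1 - ((t : ℤ) * m + i) : ℤ) = (t : ℤ) * (-m - 1) + ((t - 1 - i : ℕ) : ℤ) := by
      rw [hc]; ring
    rw [he, hg (t - 1 - i) (by omega) (-m - 1), show (-1 - m : ℤ) = -m - 1 by ring]
  · rintro h ⟨hcore, hnv⟩
    refine ⟨?_, ?_⟩
    · intro x hx
      rw [InS_transpose] at hx ⊢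
      intro hcon
      apply hx
      have h2 := hcore _ hcon
      rwa [show (-1 - (x - t) - t : ℤ) = -1 - x by ring] at h2
    · intro i hi
      rw [nVec_transpose h ht hi, nVec_transpose μ ht hi, hnv (t - 1 - i) (by omega)]
  · intro i hi
    rw [nVec_transpose μ ht hi]
end

section
/- For nonnegative integers N and integers k with ν ∈ {0,1}, the generating function for partitions into distinct parts each at most 2N+ν with BG-rank equal to k is q^{2k²-k} (q²;q²)_{2N+ν} / ((q²;q²)_{N+⌈ν/2⌉-k} (q²;q²)_{N+k}). -/
open Finset PowerSeries

/-!
A partition into distinct parts is its strictly decreasing list of parts `λ₁ > λ₂ > ⋯`, and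
row `i` of its diagram contributes `(-1)^i (λ_{i+1} mod 2)` to `r₀ - r₁`, so the BG-rank is
the alternating sum of the parities of the parts. Deciding whether `M + 1` is a part gives
`G_{M+1}(k) = G_M(k) + q^{M+1} G_M(((M+1) mod 2) - k)` for the generating functions `G_M(k)`
of partitions into distinct parts `≤ M` with BG-rank `k`. By the two `q`-Pascal rules,
`q^{2k²-k} [M, ⌊M/2⌋ + k]_{q²}` satisfies the same recursion and the same initial values.
-/

section QBinomial

variable {s : ℕ}

lemma constantCoeff_qp (hs : s ≠ 0) (L : ℕ) : constantCoeff (qp s L) = 1 := by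
  simp [qp, map_prod, hs]

lemma qp_zero : qp s 0 = 1 :=
  Finset.prod_range_zero _

lemma qp_succ (L : ℕ) : qp s (L + 1) = qp s L * (1 - X ^ (s * (L + 1))) :=
  Finset.prod_range_succ _ _

lemma qp_mul_inv (hs : s ≠ 0) (L : ℕ) : qp s L * (qp s L)⁻¹ = 1 :=
  PowerSeries.mul_inv_cancel _ (by simp [constantCoeff_qp hs])

lemma inv_qp_eq (hs : s ≠ 0) (L : ℕ) :
    (qp s L)⁻¹ = (1 - X ^ (s * (L + 1))) * (qp s (L + 1))⁻¹ := by
  calc (qp s L)⁻¹ = (qp s L)⁻¹ * (qp s (L + 1) * (qp s (L + 1))⁻¹) := by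
        rw [qp_mul_inv hs, mul_one]
    _ = (qp s L * (qp s L)⁻¹) * (1 - X ^ (s * (L + 1))) * (qp s (L + 1))⁻¹ := by
        rw [qp_succ]; ring
    _ = _ := by rw [qp_mul_inv hs, one_mul]

lemma gbinom_eq_zero {m n : ℤ} (h : n < 0 ∨ m < n) : gbinom s m n = 0 :=
  if_neg (by omega)

lemma gbinom_symm (m n : ℤ) : gbinom s m (m - n) = gbinom s m n := by
  unfold gbinom
  by_cases h : 0 ≤ n ∧ n ≤ m
  · rw [if_pos (by omega), if_pos h, sub_sub_cancel, mul_right_comm]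
  · rw [if_neg (by omega), if_neg h]

lemma gbinom_self (hs : s ≠ 0) {m : ℤ} (hm : 0 ≤ m) : gbinom s m m = 1 := by
  rw [gbinom, if_pos ⟨hm, le_rfl⟩, sub_self, Int.toNat_zero, qp_zero, inv_one, mul_one,
    qp_mul_inv hs]

lemma gbinom_zero_right (hs : s ≠ 0) {m : ℤ} (hm : 0 ≤ m) : gbinom s m 0 = 1 := by
  rw [← gbinom_symm, sub_zero, gbinom_self hs hm]

lemma gbinom_natCast_add (a b : ℕ) :
    gbinom s ((a + b : ℕ) : ℤ) a = qp s (a + b) * (qp s a)⁻¹ * (qp s b)⁻¹ := by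
  rw [gbinom, if_pos (by omega)]
  congr
  omega

lemma gbinom_succ (hs : s ≠ 0) {m : ℤ} (hm : 0 ≤ m) (n : ℤ) :
    gbinom s (m + 1) n = gbinom s m (n - 1) + X ^ (s * n.toNat) * gbinom s m n := by
  rcases lt_trichotomy n 0 with hn | rfl | hn
  · simp [gbinom_eq_zero (Or.inl hn), gbinom_eq_zero (Or.inl (by omega : n - 1 < 0))]
  · simp [gbinom_zero_right hs hm, gbinom_zero_right hs (by omega : 0 ≤ m + 1),
      gbinom_eq_zero (s := s) (m := m) (n := -1) (Or.inl (by omega))]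
  rcases lt_or_ge m n with hmn | hnm
  · rcases eq_or_lt_of_le (show m + 1 ≤ n by omega) with rfl | hmn'
    · simp [gbinom_self hs hm, gbinom_self hs (by omega : 0 ≤ m + 1),
        gbinom_eq_zero (s := s) (Or.inr (lt_add_one m))]
    · simp [gbinom_eq_zero (Or.inr hmn), gbinom_eq_zero (Or.inr hmn'),
        gbinom_eq_zero (s := s) (m := m) (n := n - 1) (Or.inr (by omega))]
  obtain ⟨a, b, rfl, rfl⟩ : ∃ a b : ℕ, n = ((a + 1 : ℕ) : ℤ) ∧ m = ((a + 1 + b : ℕ) : ℤ) :=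
    ⟨(n - 1).toNat, (m - n).toNat, by omega, by omega⟩
  rw [show ((a + 1 + b : ℕ) : ℤ) + 1 = ((a + 1 + (b + 1) : ℕ) : ℤ) by push_cast; ring,
    show ((a + 1 : ℕ) : ℤ) - 1 = (a : ℤ) by push_cast; ring,
    Int.toNat_natCast, gbinom_natCast_add (a + 1) b, gbinom_natCast_add (a + 1) (b + 1),
    show a + 1 + b = a + (b + 1) by ring, gbinom_natCast_add a (b + 1),
    show a + 1 + (b + 1) = a + b + 1 + 1 by ring, show a + (b + 1) = a + b + 1 by ring,
    qp_succ (a + b + 1), inv_qp_eq hs a, inv_qp_eq hs b]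
  ring

lemma gbinom_succ' (hs : s ≠ 0) {m : ℤ} (hm : 0 ≤ m) (n : ℤ) :
    gbinom s (m + 1) n = X ^ (s * (m + 1 - n).toNat) * gbinom s m (n - 1) + gbinom s m n := by
  rw [← gbinom_symm, gbinom_succ hs hm, ← gbinom_symm m n, ← gbinom_symm m (n - 1),
    show m + 1 - n - 1 = m - n by ring, show m - (n - 1) = m + 1 - n by ring, add_comm]

lemma gbinom_natCast_eq_qp_mul_qpi (m : ℕ) (n : ℤ) :
    gbinom s m n = qp s m * qpi s (m - n) * qpi s n := by
  by_cases h : 0 ≤ n ∧ n ≤ (m : ℤ)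
  · rw [gbinom, if_pos h, qpi, qpi, if_pos (by omega), if_pos h.1, Int.toNat_natCast]
    ring
  · rw [gbinom_eq_zero (by omega)]
    rcases not_and_or.1 h with h | h <;> simp [qpi, h]

end QBinomial

noncomputable def bgSeries (M : ℕ) (k : ℤ) : PowerSeries ℚ :=
  X ^ (2 * k ^ 2 - k).toNat * gbinom 2 M ((M / 2 : ℕ) + k)

lemma natCast_toNat_two_mul_sq_sub (k : ℤ) : (((2 * k ^ 2 - k).toNat : ℕ) : ℤ) = 2 * k ^ 2 - k :=
  Int.toNat_of_nonneg (by nlinarith)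

lemma X_pow_mul_gbinom_congr {s e₁ e₂ : ℕ} {m n : ℤ} (h : 0 ≤ n → n ≤ m → e₁ = e₂) :
    (X : PowerSeries ℚ) ^ e₁ * gbinom s m n = X ^ e₂ * gbinom s m n := by
  by_cases hn : 0 ≤ n ∧ n ≤ m
  · rw [h hn.1 hn.2]
  · rw [gbinom_eq_zero (by omega), mul_zero, mul_zero]

lemma bgSeries_zero (k : ℤ) : bgSeries 0 k = if k = 0 then 1 else 0 := by
  split_ifs with hk
  · simp [bgSeries, hk, gbinom_zero_right two_ne_zero le_rfl]
  · rw [bgSeries, gbinom_eq_zero (by omega), mul_zero]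

lemma bgSeries_succ (M : ℕ) (k : ℤ) :
    bgSeries (M + 1) k = bgSeries M k + X ^ (M + 1) * bgSeries M (((M + 1) % 2 : ℕ) - k) := by
  have hk := natCast_toNat_two_mul_sq_sub k
  obtain ⟨N, rfl | rfl⟩ := Nat.even_or_odd' M
  · have hk' : (((2 * ((1 : ℕ) - k) ^ 2 - ((1 : ℕ) - k)).toNat : ℕ) : ℤ) =
        2 * k ^ 2 - 3 * k + 1 := by
      rw [natCast_toNat_two_mul_sq_sub]; push_cast; ring
    simp only [bgSeries, show (2 * N + 1) / 2 = N by omega, show 2 * N / 2 = N by omega,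
      show (2 * N + 1) % 2 = 1 by omega]
    rw [show ((2 * N + 1 : ℕ) : ℤ) = (2 * N : ℕ) + 1 by push_cast; ring,
      gbinom_succ' two_ne_zero (by positivity), ← gbinom_symm _ (N + ((1 : ℕ) - k)),
      show ((2 * N : ℕ) : ℤ) - (N + ((1 : ℕ) - k)) = N + k - 1 by push_cast; ring,
      mul_add, add_comm, ← mul_assoc, ← mul_assoc, ← pow_add, ← pow_add]
    congr 1
    exact X_pow_mul_gbinom_congr fun _ _ => by omega
  · have hk' : (((2 * ((0 : ℕ) - k) ^ 2 - ((0 : ℕ) - k)).toNat : ℕ) : ℤ) = 2 * k ^ 2 + k := by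
      rw [natCast_toNat_two_mul_sq_sub]; push_cast; ring
    simp only [bgSeries, show (2 * N + 1 + 1) / 2 = N + 1 by omega,
      show (2 * N + 1) / 2 = N by omega, show (2 * N + 1 + 1) % 2 = 0 by omega]
    rw [show ((2 * N + 1 + 1 : ℕ) : ℤ) = (2 * N + 1 : ℕ) + 1 by push_cast; ring,
      gbinom_succ two_ne_zero (by positivity), ← gbinom_symm _ (N + ((0 : ℕ) - k)),
      show ((N + 1 : ℕ) : ℤ) + k - 1 = N + k by push_cast; ring,
      show ((2 * N + 1 : ℕ) : ℤ) - (N + ((0 : ℕ) - k)) = (N + 1 : ℕ) + k by push_cast; ring,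
      mul_add, ← mul_assoc, ← mul_assoc, ← pow_add, ← pow_add]
    congr 1
    exact X_pow_mul_gbinom_congr fun _ _ => by omega

def parityAltSum (l : List ℕ) : ℤ :=
  (l.map fun x => ((x % 2 : ℕ) : ℤ)).alternatingSum

lemma parityAltSum_cons (a : ℕ) (l : List ℕ) :
    parityAltSum (a :: l) = ((a % 2 : ℕ) : ℤ) - parityAltSum l :=
  List.alternatingSum_cons _ _

lemma sum_range_neg_one_pow {R : Type*} [Ring R] (L : ℕ) :
    ∑ j ∈ range L, (-1 : R) ^ j = ((L % 2 : ℕ) : R) := by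
  induction L with
  | zero => simp
  | succ L ih =>
    rw [sum_range_succ, ih]
    rcases Nat.even_or_odd L with h | h
    · simp [h.neg_one_pow, Nat.succ_mod_two_eq_one_iff.2 (Nat.even_iff.1 h), Nat.even_iff.1 h]
    · simp [h.neg_one_pow, Nat.succ_mod_two_eq_zero_iff.2 (Nat.odd_iff.1 h), Nat.odd_iff.1 h]

lemma ZMod.natCast_sub_natCast_eq_zero_iff_even (a b : ℕ) :
    (a : ZMod 2) - b = 0 ↔ Even (a + b) := by
  rw [CharTwo.sub_eq_add, ← Nat.cast_add, ZMod.natCast_eq_zero_iff_even]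

lemma ZMod.natCast_sub_natCast_eq_one_iff_odd (a b : ℕ) :
    (a : ZMod 2) - b = 1 ↔ Odd (a + b) := by
  rw [CharTwo.sub_eq_add, ← Nat.cast_add, ZMod.natCast_eq_one_iff_odd]

namespace YoungDiagram

variable (μ : YoungDiagram)

lemma sum_cells {β : Type*} [AddCommMonoid β] (f : ℕ × ℕ → β) :
    ∑ c ∈ μ.cells, f c = ∑ i ∈ range (μ.colLen 0), ∑ j ∈ range (μ.rowLen i), f (i, j) := by
  rw [← Finset.sum_fiberwise_of_maps_to (g := Prod.fst) (t := range (μ.colLen 0))]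
  · refine Finset.sum_congr rfl fun i _ => ?_
    rw [show μ.cells.filter (·.1 = i) = μ.row i from rfl, row_eq_prod, Finset.sum_product,
      Finset.sum_singleton]
  · intro c hc
    exact mem_range.2 (mem_iff_lt_colLen.1 (μ.up_left_mem le_rfl (Nat.zero_le _) hc))

lemma card_cells_eq_sum_rowLens : μ.cells.card = μ.rowLens.sum := by
  rw [card_eq_sum_ones, sum_cells]
  simp only [sum_const, card_range, smul_eq_mul, mul_one]
  rw [Finset.sum_eq_multiset_sum, Finset.range_val, Multiset.range, Multiset.map_coe,
    Multiset.sum_coe, rowLens]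

lemma rCount_two_sub_eq_sum_cells :
    (rCount μ 2 0 : ℤ) - rCount μ 2 1 = ∑ c ∈ μ.cells, (-1 : ℤ) ^ (c.1 + c.2) := by
  simp only [rCount, card_filter, Nat.cast_sum, ← sum_sub_distrib]
  refine sum_congr rfl fun c _ => ?_
  simp only [ZMod.natCast_sub_natCast_eq_zero_iff_even, ZMod.natCast_sub_natCast_eq_one_iff_odd,
    add_comm c.2]
  rcases Nat.even_or_odd (c.1 + c.2) with h | h
  · simp [h, h.neg_one_pow, Nat.not_odd_iff_even.2 h]
  · simp [h, h.neg_one_pow, Nat.not_even_iff_odd.2 h]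

lemma rCount_two_sub_eq_parityAltSum :
    (rCount μ 2 0 : ℤ) - rCount μ 2 1 = parityAltSum μ.rowLens := by
  rw [rCount_two_sub_eq_sum_cells, sum_cells, parityAltSum, List.alternatingSum_eq_finsetSum]
  simp only [pow_add, ← mul_sum, sum_range_neg_one_pow]
  rw [← Fin.sum_univ_eq_sum_range]
  exact Fintype.sum_equiv (finCongr (by simp)) _ _ fun i => by simp

lemma mult_eq_count (m : ℕ) : mult μ m = μ.rowLens.count m := by
  rw [mult, rowLens, ← Multiset.coe_count, ← Multiset.map_coe, Multiset.count_map,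
    Finset.card_def, Finset.filter_val]
  simp only [eq_comm]
  rfl

lemma forall_mult_le_one_iff_sortedGT :
    (∀ m, 1 ≤ m → mult μ m ≤ 1) ↔ μ.rowLens.SortedGT := by
  rw [List.sortedGT_iff_nodup_and_sortedGE, List.nodup_iff_count_le_one]
  refine ⟨fun h => ⟨fun m => ?_, μ.rowLens_sorted⟩, fun h m _ => μ.mult_eq_count m ▸ h.1 m⟩
  rcases Nat.eq_zero_or_pos m with rfl | hm
  · rw [List.count_eq_zero.2 fun h0 => (μ.pos_of_mem_rowLens 0 h0).false]
    exact zero_le_one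
  · exact μ.mult_eq_count m ▸ h m hm

lemma rowLen_zero_le_iff (M : ℕ) : μ.rowLen 0 ≤ M ↔ ∀ x ∈ μ.rowLens, x ≤ M := by
  refine ⟨fun h x hx => ?_, fun h => ?_⟩
  · obtain ⟨i, -, rfl⟩ := List.mem_map.1 hx
    exact (μ.rowLen_anti 0 i i.zero_le).trans h
  · by_contra! hM
    have h0 : 0 < μ.colLen 0 := mem_iff_lt_colLen.1 (mem_iff_lt_rowLen.2 (by omega))
    exact (h _ (List.mem_map.2 ⟨0, List.mem_range.2 h0, rfl⟩)).not_gt hM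

end YoungDiagram

def distinctPartLists : ℕ → Finset (List ℕ)
  | 0 => {[]}
  | M + 1 =>
    distinctPartLists M ∪ (distinctPartLists M).map ⟨List.cons (M + 1), List.cons_injective⟩

lemma mem_distinctPartLists {M : ℕ} {l : List ℕ} :
    l ∈ distinctPartLists M ↔ l.SortedGT ∧ ∀ x ∈ l, 0 < x ∧ x ≤ M := by
  induction M generalizing l with
  | zero =>
    cases l with
    | nil => simp [distinctPartLists, List.sortedGT_iff_pairwise]
    | cons a l => simp [distinctPartLists]; omega
  | succ M ih =>
    cases l with
    | nil => simp [distinctPartLists, ih]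
    | cons a l =>
      simp only [distinctPartLists, mem_union, mem_map, Function.Embedding.coeFn_mk,
        List.cons.injEq, ih, List.sortedGT_iff_pairwise, List.pairwise_cons,
        List.forall_mem_cons]
      constructor
      · rintro (⟨hs, ⟨ha, haM⟩, hl⟩ | ⟨t, ⟨ht, htM⟩, rfl, rfl⟩)
        · exact ⟨hs, ⟨ha, by omega⟩, fun x hx => ⟨(hl x hx).1, by grind⟩⟩
        · exact ⟨⟨fun x hx => by grind, ht⟩, ⟨by omega, le_rfl⟩,
            fun x hx => ⟨(htM x hx).1, by grind⟩⟩
      · rintro ⟨⟨hgt, hs⟩, ⟨ha, haM⟩, hl⟩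
        rcases eq_or_lt_of_le haM with rfl | haM
        · exact Or.inr ⟨l, ⟨hs, fun x hx => ⟨(hl x hx).1, by grind⟩⟩, rfl, rfl⟩
        · exact Or.inl ⟨⟨hgt, hs⟩, ⟨ha, by omega⟩, fun x hx => ⟨(hl x hx).1, by grind⟩⟩

noncomputable def distinctPartsGF (M : ℕ) (k : ℤ) : PowerSeries ℚ :=
  ∑ l ∈ (distinctPartLists M).filter (parityAltSum · = k), X ^ l.sum

lemma distinctPartsGF_zero (k : ℤ) : distinctPartsGF 0 k = if k = 0 then 1 else 0 := by
  rw [distinctPartsGF, distinctPartLists, filter_singleton]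
  by_cases hk : k = 0 <;> simp [parityAltSum, hk, eq_comm]

lemma distinctPartsGF_succ (M : ℕ) (k : ℤ) :
    distinctPartsGF (M + 1) k =
      distinctPartsGF M k + X ^ (M + 1) * distinctPartsGF M (((M + 1) % 2 : ℕ) - k) := by
  rw [distinctPartsGF, distinctPartLists, filter_union, sum_union, filter_map, sum_map]
  · rw [distinctPartsGF, distinctPartsGF, mul_sum]
    congr 1
    refine sum_congr (filter_congr fun t _ => ?_) fun t _ => ?_
    · simp only [Function.comp_apply, Function.Embedding.coeFn_mk, parityAltSum_cons]
      omega
    · rw [Function.Embedding.coeFn_mk, List.sum_cons, pow_add]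
  · refine disjoint_filter_filter (disjoint_left.2 fun l hl hl' => ?_)
    obtain ⟨t, -, rfl⟩ := mem_map.1 hl'
    have := (mem_distinctPartLists.1 hl).2 (M + 1) List.mem_cons_self
    omega

lemma YoungDiagram.rowLens_mem_distinctPartLists_iff (μ : YoungDiagram) (M : ℕ) :
    μ.rowLens ∈ distinctPartLists M ↔ (∀ m, 1 ≤ m → mult μ m ≤ 1) ∧ μ.rowLen 0 ≤ M := by
  rw [mem_distinctPartLists, μ.forall_mult_le_one_iff_sortedGT, μ.rowLen_zero_le_iff]
  exact and_congr_right fun _ =>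
    ⟨fun h x hx => (h x hx).2, fun h x hx => ⟨μ.pos_of_mem_rowLens x hx, h x hx⟩⟩

lemma GF_eq_distinctPartsGF (M : ℕ) (k : ℤ) :
    GF (fun μ => (∀ m, 1 ≤ m → mult μ m ≤ 1) ∧ μ.rowLen 0 ≤ M ∧
        (rCount μ 2 0 : ℤ) - rCount μ 2 1 = k) = distinctPartsGF M k := by
  ext n
  rw [GF, coeff_mk, distinctPartsGF, map_sum]
  simp only [coeff_X_pow, sum_boole]
  set F := {l ∈ {l ∈ distinctPartLists M | parityAltSum l = k} | n = l.sum}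
  rw [← Nat.card_eq_finsetCard]
  refine congrArg _ (Nat.card_congr (((YoungDiagram.equivListRowLens.subtypeEquiv
    (q := fun w => w.1 ∈ F) fun μ => ?_).trans (Equiv.subtypeSubtypeEquivSubtypeInter _ _)).trans
    (Equiv.subtypeEquivRight fun l => and_iff_right_of_imp fun hl => ?_)))
  · simp only [F, YoungDiagram.equivListRowLens_apply_coe, mem_filter,
      μ.rowLens_mem_distinctPartLists_iff, μ.rCount_two_sub_eq_parityAltSum,
      μ.card_cells_eq_sum_rowLens]
    tauto
  · obtain ⟨hs, hpos⟩ := mem_distinctPartLists.1 (mem_filter.1 (mem_filter.1 hl).1).1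
    exact ⟨hs.sortedGE, fun x hx => (hpos x hx).1⟩

lemma distinctPartsGF_eq_bgSeries (M : ℕ) (k : ℤ) : distinctPartsGF M k = bgSeries M k := by
  induction M generalizing k with
  | zero => rw [distinctPartsGF_zero, bgSeries_zero]
  | succ M ih => rw [distinctPartsGF_succ, bgSeries_succ, ih, ih]

/-- generating function for partitions into distinct parts ≤ 2N+ν with
BG-rank equal to k. -/
theorem genfn_distinct_bg_rank (N : ℕ) (k : ℤ) (ν : ℕ) (hν : ν ≤ 1) :
    GF (fun μ => (∀ m : ℕ, 1 ≤ m → mult μ m ≤ 1) ∧ μ.rowLen 0 ≤ 2 * N + ν ∧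
        (rCount μ 2 (0 : ZMod 2) : ℤ) - (rCount μ 2 (1 : ZMod 2) : ℤ) = k) =
      (PowerSeries.X : PowerSeries ℚ) ^ ((2 * k ^ 2 - k).toNat) *
        qp 2 (2 * N + ν) *
        qpi 2 ((N : ℤ) + ⌈(ν : ℚ) / 2⌉ - k) * qpi 2 ((N : ℤ) + k) := by
  have hceil : ⌈(ν : ℚ) / 2⌉ = ν := by interval_cases ν <;> norm_num
  rw [GF_eq_distinctPartsGF, distinctPartsGF_eq_bgSeries, bgSeries,
    show (2 * N + ν) / 2 = N by omega, gbinom_natCast_eq_qp_mul_qpi, hceil,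
    show ((2 * N + ν : ℕ) : ℤ) - (N + k) = N + ν - k by push_cast; ring]
  ring
end
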